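/- Let d, n, m, p be positive integers and Σ = {1,…,d}. A dLPV-SSA ({A_i, K_i}_{i=1}^d, C) of dimension n is minimal if and only if both of the following hold: (a) span-reachability: the columns of the matrices A_w K_σ, taken over all words w ∈ Σ* with |w| ≤ n−1 and all σ ∈ Σ, span ℝⁿ; and (b) observability: the intersection over all words w ∈ Σ* with |w| ≤ n−1 of the kernels of C A_w is the zero subspace. -/

import Mathlib

open Matrix

/-- Word product `M_w = M_{σ_k} ⋯ M_{σ_1}` for a word `w = σ_1 ⋯ σ_k`,
represented as a list `[σ_1, …, σ_k]`; `M_ε = 1`. -/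
noncomputable def wordProd {d : ℕ} {ι : Type} [Fintype ι] [DecidableEq ι]
    (A : Fin d → Matrix ι ι ℝ) : List (Fin d) → Matrix ι ι ℝ
  | [] => 1
  | σ :: s => wordProd A s * A σ

/-- A dLPV-SSA `({A_i, K_i}, C)` of dimension `n` is minimal if every dLPV-SSA of any
dimension `n'` with the same sub-Markov parameters `C A_w K_σ` satisfies `n' ≥ n`. -/
def IsMinimal (d m p n : ℕ)
    (A : Fin d → Matrix (Fin n) (Fin n) ℝ)
    (K : Fin d → Matrix (Fin n) (Fin m) ℝ)
    (C : Matrix (Fin p) (Fin n) ℝ) : Prop :=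
  ∀ (n' : ℕ) (A' : Fin d → Matrix (Fin n') (Fin n') ℝ)
    (K' : Fin d → Matrix (Fin n') (Fin m) ℝ) (C' : Matrix (Fin p) (Fin n') ℝ),
    (∀ (w : List (Fin d)) (σ : Fin d),
      C' * wordProd A' w * K' σ = C * wordProd A w * K σ) → n ≤ n'

namespace Stmt13Aux

lemma wordProd_nil {d : ℕ} {ι : Type} [Fintype ι] [DecidableEq ι]
    (A : Fin d → Matrix ι ι ℝ) : wordProd A [] = 1 := rfl

lemma wordProd_cons {d : ℕ} {ι : Type} [Fintype ι] [DecidableEq ι]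
    (A : Fin d → Matrix ι ι ℝ) (σ : Fin d) (s : List (Fin d)) :
    wordProd A (σ :: s) = wordProd A s * A σ := rfl

lemma wordProd_append {d : ℕ} {ι : Type} [Fintype ι] [DecidableEq ι]
    (A : Fin d → Matrix ι ι ℝ) (v w : List (Fin d)) :
    wordProd A (v ++ w) = wordProd A w * wordProd A v := by
  induction v with
  | nil => simp [wordProd_nil]
  | cons σ s ih =>
    rw [List.cons_append, wordProd_cons, wordProd_cons, ih, Matrix.mul_assoc]

lemma mulVec_col {a b c : ℕ} (M : Matrix (Fin a) (Fin b) ℝ) (N : Matrix (Fin b) (Fin c) ℝ)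
    (j : Fin c) : M.mulVec (fun x => N x j) = fun i => (M * N) i j := by
  funext i
  simp [Matrix.mulVec, Matrix.mul_apply, dotProduct]

lemma mulVec_sum_cols {a b : ℕ} (M : Matrix (Fin a) (Fin b) ℝ) (u : Fin b → ℝ) :
    M.mulVec u = ∑ j, u j • (fun i => M i j) := by
  funext i
  simp [Matrix.mulVec, dotProduct, Finset.sum_apply, mul_comm]

variable {d n m p : ℕ}

/-- Reachability spaces -/
def Rk (A : Fin d → Matrix (Fin n) (Fin n) ℝ) (K : Fin d → Matrix (Fin n) (Fin m) ℝ)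
    (k : ℕ) : Submodule ℝ (Fin n → ℝ) :=
  Submodule.span ℝ {x : Fin n → ℝ |
    ∃ (w : List (Fin d)) (σ : Fin d) (j : Fin m),
      w.length ≤ k ∧ x = fun a => (wordProd A w * K σ) a j}

variable (A : Fin d → Matrix (Fin n) (Fin n) ℝ) (K : Fin d → Matrix (Fin n) (Fin m) ℝ)

lemma Rk_mono {k l : ℕ} (h : k ≤ l) : Rk A K k ≤ Rk A K l :=
  Submodule.span_mono (fun x ⟨w, σ, j, hw, hx⟩ => ⟨w, σ, j, hw.trans h, hx⟩)

lemma gen_concat (w : List (Fin d)) (i σ : Fin d) (j : Fin m) :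
    (fun a => (wordProd A (w ++ [i]) * K σ) a j)
      = (A i).mulVecLin (fun a => (wordProd A w * K σ) a j) := by
  have h1 : wordProd A (w ++ [i]) = A i * wordProd A w := by
    rw [wordProd_append]; simp [wordProd_cons, wordProd_nil]
  rw [h1, Matrix.mulVecLin_apply, mulVec_col]
  funext a
  rw [Matrix.mul_assoc]

lemma map_A_Rk (i : Fin d) (k : ℕ) :
    Submodule.map ((A i).mulVecLin) (Rk A K k) ≤ Rk A K (k + 1) := by
  rw [Rk, Submodule.map_span, Submodule.span_le]
  rintro _ ⟨x, ⟨w, σ, j, hw, rfl⟩, rfl⟩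
  exact Submodule.subset_span ⟨w ++ [i], σ, j, by simpa using Nat.add_le_add_right hw 1,
    (gen_concat A K w i σ j).symm⟩

lemma Rk_step {k : ℕ} (h : Rk A K k = Rk A K (k + 1)) :
    Rk A K (k + 1) = Rk A K (k + 2) := by
  refine le_antisymm (Rk_mono A K (by omega)) ?_
  rw [Rk, Submodule.span_le]
  rintro x ⟨w, σ, j, hw, rfl⟩
  by_cases hlen : w.length ≤ k + 1
  · exact Submodule.subset_span ⟨w, σ, j, hlen, rfl⟩
  · rcases List.eq_nil_or_concat w with rfl | ⟨w', i, rfl⟩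
    · simp at hlen
    · rw [List.concat_eq_append] at hw ⊢
      rw [gen_concat A K w' i σ j]
      have hw' : w'.length ≤ k + 1 := by
        rw [List.concat_eq_append] at hlen
        simp only [List.length_append, List.length_cons, List.length_nil] at hw
        omega
      have hx : (fun a => (wordProd A w' * K σ) a j) ∈ Rk A K (k + 1) :=
        Submodule.subset_span ⟨w', σ, j, hw', rfl⟩
      rw [← h] at hx
      exact map_A_Rk A K i k ⟨_, hx, rfl⟩

lemma Rk_stab' {k : ℕ} (h : Rk A K k = Rk A K (k + 1)) :
    ∀ j : ℕ, Rk A K (k + j) = Rk A K (k + j + 1) ∧ Rk A K (k + j) = Rk A K k := by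
  intro j
  induction j with
  | zero => exact ⟨h, rfl⟩
  | succ j ih =>
    have h1 : Rk A K (k + j + 1) = Rk A K (k + j + 2) := Rk_step A K ih.1
    have h2 : k + (j + 1) = k + j + 1 := by omega
    rw [h2]
    exact ⟨h1, by rw [← ih.1]; exact ih.2⟩

lemma Rk_stab {k l : ℕ} (h : Rk A K k = Rk A K (k + 1)) (hl : k ≤ l) :
    Rk A K l = Rk A K k := by
  have := (Rk_stab' A K h (l - k)).2
  rwa [Nat.add_sub_cancel' hl] at this


lemma K_mem_Rk (σ : Fin d) (u : Fin m → ℝ) (k : ℕ) :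
    (K σ).mulVecLin u ∈ Rk A K k := by
  rw [Matrix.mulVecLin_apply, mulVec_sum_cols]
  refine Submodule.sum_mem _ fun j _ => Submodule.smul_mem _ _ ?_
  exact Submodule.subset_span ⟨[], σ, j, Nat.zero_le _, by simp [wordProd_nil]⟩

lemma Rk_top_stab (n0 : ℕ) (hn : n = n0 + 1) :
    Rk A K n0 = Rk A K (n0 + 1) := by
  by_contra hne
  have hstrict : ∀ k, k ≤ n0 → Rk A K k < Rk A K (k + 1) := by
    intro k hk
    refine lt_of_le_of_ne (Rk_mono A K (by omega)) fun he => hne ?_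
    rw [Rk_stab A K he hk, Rk_stab A K he (by omega : k ≤ n0 + 1)]
  have h0 : Rk A K 0 ≠ ⊥ := by
    intro hbot
    have h1 : Rk A K 1 ≤ ⊥ := by
      rw [Rk, Submodule.span_le]
      rintro x ⟨w, σ, j, hw, rfl⟩
      rcases List.eq_nil_or_concat w with rfl | ⟨w', i, rfl⟩
      · rw [← hbot]
        exact Submodule.subset_span ⟨[], σ, j, le_refl 0, rfl⟩
      · have hw' : w' = [] := by
          rw [List.concat_eq_append] at hw
          simp only [List.length_append, List.length_cons, List.length_nil] at hw
          exact List.length_eq_zero_iff.mp (by omega)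
        subst hw'
        rw [List.concat_eq_append, gen_concat]
        have hx : (fun a => (wordProd A [] * K σ) a j) ∈ Rk A K 0 :=
          Submodule.subset_span ⟨[], σ, j, le_rfl, rfl⟩
        rw [hbot, Submodule.mem_bot] at hx
        rw [hx]
        simp
    have h2 := hstrict 0 (Nat.zero_le _)
    rw [hbot] at h2
    exact absurd (le_bot_iff.mp h1) (ne_of_gt h2)
  have hdim : ∀ k, k ≤ n0 + 1 → k + 1 ≤ Module.finrank ℝ (Rk A K k) := by
    intro k
    induction k with
    | zero =>
      intro _
      have : Nontrivial (Rk A K 0) := Submodule.nontrivial_iff_ne_bot.mpr h0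
      exact Module.finrank_pos_iff.mpr this
    | succ k ih =>
      intro hk
      have h3 := Submodule.finrank_lt_finrank_of_lt (hstrict k (by omega))
      have h4 := ih (by omega)
      omega
  have h5 := hdim (n0 + 1) le_rfl
  have h6 : Module.finrank ℝ (Rk A K (n0 + 1)) ≤ n := by
    have := Submodule.finrank_le (Rk A K (n0 + 1))
    simpa [Module.finrank_pi] using this
  omega

lemma map_A_R_stable (n0 : ℕ) (hn : n = n0 + 1) (i : Fin d) :
    ∀ x ∈ Rk A K n0, (A i).mulVecLin x ∈ Rk A K n0 := by
  intro x hx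
  have h1 := map_A_Rk A K i n0 ⟨x, hx, rfl⟩
  rwa [← Rk_top_stab A K n0 hn] at h1


/-- Unobservability spaces -/
def Nk (A : Fin d → Matrix (Fin n) (Fin n) ℝ) (C : Matrix (Fin p) (Fin n) ℝ)
    (k : ℕ) : Submodule ℝ (Fin n → ℝ) where
  carrier := {x | ∀ w : List (Fin d), w.length ≤ k → (C * wordProd A w).mulVec x = 0}
  add_mem' := by
    intro a b ha hb w hw
    rw [Matrix.mulVec_add, ha w hw, hb w hw, add_zero]
  zero_mem' := by
    intro w hw
    rw [Matrix.mulVec_zero]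
  smul_mem' := by
    intro c x hx w hw
    rw [Matrix.mulVec_smul, hx w hw, smul_zero]

variable (C : Matrix (Fin p) (Fin n) ℝ)

lemma mem_Nk {k : ℕ} {x : Fin n → ℝ} :
    x ∈ Nk A C k ↔ ∀ w : List (Fin d), w.length ≤ k → (C * wordProd A w).mulVec x = 0 :=
  Iff.rfl

lemma Nk_anti {k l : ℕ} (h : k ≤ l) : Nk A C l ≤ Nk A C k :=
  fun _ hx w hw => hx w (hw.trans h)

lemma map_A_Nk (i : Fin d) (k : ℕ) {x : Fin n → ℝ} (hx : x ∈ Nk A C (k + 1)) :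
    (A i).mulVecLin x ∈ Nk A C k := by
  intro w hw
  rw [Matrix.mulVecLin_apply, Matrix.mulVec_mulVec]
  have h1 : C * wordProd A w * A i = C * wordProd A (i :: w) := by
    rw [wordProd_cons, ← Matrix.mul_assoc]
  rw [h1]
  exact hx (i :: w) (by simpa using Nat.add_le_add_right hw 1)

lemma Nk_step {k : ℕ} (h : Nk A C k = Nk A C (k + 1)) :
    Nk A C (k + 1) = Nk A C (k + 2) := by
  refine le_antisymm ?_ (Nk_anti A C (by omega))
  intro x hx w hw
  cases w with
  | nil => exact hx [] (Nat.zero_le _)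
  | cons i s =>
    have hs : s.length ≤ k + 1 := by
      simp only [List.length_cons] at hw; omega
    have h1 : (A i).mulVecLin x ∈ Nk A C (k + 1) := by
      rw [← h]
      exact map_A_Nk A C i k hx
    have h2 := h1 s hs
    rw [Matrix.mulVecLin_apply, Matrix.mulVec_mulVec] at h2
    rw [wordProd_cons, ← Matrix.mul_assoc]
    exact h2

lemma Nk_stab' {k : ℕ} (h : Nk A C k = Nk A C (k + 1)) :
    ∀ j : ℕ, Nk A C (k + j) = Nk A C (k + j + 1) ∧ Nk A C (k + j) = Nk A C k := by
  intro j
  induction j with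
  | zero => exact ⟨h, rfl⟩
  | succ j ih =>
    have h1 : Nk A C (k + j + 1) = Nk A C (k + j + 2) := Nk_step A C ih.1
    have h2 : k + (j + 1) = k + j + 1 := by omega
    rw [h2]
    exact ⟨h1, by rw [← ih.1]; exact ih.2⟩

lemma Nk_stab {k l : ℕ} (h : Nk A C k = Nk A C (k + 1)) (hl : k ≤ l) :
    Nk A C l = Nk A C k := by
  have := (Nk_stab' A C h (l - k)).2
  rwa [Nat.add_sub_cancel' hl] at this

lemma Nk_bot_stab (n0 : ℕ) (hn : n = n0 + 1) :
    Nk A C n0 = Nk A C (n0 + 1) := by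
  by_contra hne
  have hstrict : ∀ k, k ≤ n0 → Nk A C (k + 1) < Nk A C k := by
    intro k hk
    refine lt_of_le_of_ne (Nk_anti A C (by omega)) fun he => hne ?_
    rw [Nk_stab A C he.symm hk, Nk_stab A C he.symm (by omega : k ≤ n0 + 1)]
  have h0 : Nk A C 0 ≠ ⊤ := by
    intro htop
    have hC : ∀ y : Fin n → ℝ, C.mulVec y = 0 := by
      intro y
      have h1 : y ∈ Nk A C 0 := htop ▸ Submodule.mem_top
      have h2 := h1 [] le_rfl
      rwa [wordProd_nil, Matrix.mul_one] at h2
    have h1 : (⊤ : Submodule ℝ (Fin n → ℝ)) ≤ Nk A C 1 := by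
      intro x _ w hw
      rw [← Matrix.mulVec_mulVec, hC]
    have h2 := hstrict 0 (Nat.zero_le _)
    rw [htop] at h2
    exact absurd (top_le_iff.mp h1) (ne_of_lt h2)
  have hdim : ∀ k, k ≤ n0 + 1 → Module.finrank ℝ (Nk A C k) + k ≤ n0 := by
    intro k
    induction k with
    | zero =>
      intro _
      have h1 : Nk A C 0 < ⊤ := lt_top_iff_ne_top.mpr h0
      have h2 := Submodule.finrank_lt h1.ne
      simp only [Module.finrank_pi, Fintype.card_fin] at h2
      omega
    | succ k ih =>
      intro hk
      have h3 := Submodule.finrank_lt_finrank_of_lt (hstrict k (by omega))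
      have h4 := ih (by omega)
      omega
  have h5 := hdim (n0 + 1) le_rfl
  omega

lemma map_A_N_stable (n0 : ℕ) (hn : n = n0 + 1) (i : Fin d) :
    ∀ x ∈ Nk A C n0, (A i).mulVecLin x ∈ Nk A C n0 := by
  intro x hx
  rw [Nk_bot_stab A C n0 hn] at hx
  exact map_A_Nk A C i n0 hx

lemma C_ker_N {k : ℕ} {x : Fin n → ℝ} (hx : x ∈ Nk A C k) : C.mulVecLin x = 0 := by
  have h1 := hx [] (Nat.zero_le _)
  rwa [wordProd_nil, Matrix.mul_one, ← Matrix.mulVecLin_apply] at h1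


lemma toMatrix_basisFun_mulVecLin {a b : ℕ} (M : Matrix (Fin a) (Fin b) ℝ) :
    LinearMap.toMatrix (Pi.basisFun ℝ (Fin b)) (Pi.basisFun ℝ (Fin a)) (M.mulVecLin) = M := by
  have h : LinearMap.toMatrix (Pi.basisFun ℝ (Fin b)) (Pi.basisFun ℝ (Fin a))
      = (LinearMap.toMatrix' : ((Fin b → ℝ) →ₗ[ℝ] (Fin a → ℝ)) ≃ₗ[ℝ] _) := rfl
  rw [h, ← Matrix.toLin'_apply', LinearMap.toMatrix'_toLin']

lemma restrict_realization (R : Submodule ℝ (Fin n → ℝ))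
    (hA : ∀ i : Fin d, ∀ x ∈ R, (A i).mulVecLin x ∈ R)
    (hK : ∀ (σ : Fin d) (u : Fin m → ℝ), (K σ).mulVecLin u ∈ R) :
    ∃ (A' : Fin d → Matrix (Fin (Module.finrank ℝ R)) (Fin (Module.finrank ℝ R)) ℝ)
      (K' : Fin d → Matrix (Fin (Module.finrank ℝ R)) (Fin m) ℝ)
      (C' : Matrix (Fin p) (Fin (Module.finrank ℝ R)) ℝ),
      ∀ (w : List (Fin d)) (σ : Fin d),
        C' * wordProd A' w * K' σ = C * wordProd A w * K σ := by
  classical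
  let b := Module.finBasis ℝ R
  let fA : Fin d → (R →ₗ[ℝ] R) := fun i => ((A i).mulVecLin).restrict (hA i)
  let A' : Fin d → Matrix (Fin (Module.finrank ℝ R)) (Fin (Module.finrank ℝ R)) ℝ :=
    fun i => LinearMap.toMatrix b b (fA i)
  let fK : Fin d → ((Fin m → ℝ) →ₗ[ℝ] R) :=
    fun σ => LinearMap.codRestrict R ((K σ).mulVecLin) (hK σ)
  let K' : Fin d → Matrix (Fin (Module.finrank ℝ R)) (Fin m) ℝ :=
    fun σ => LinearMap.toMatrix (Pi.basisFun ℝ (Fin m)) b (fK σ)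
  let fC : R →ₗ[ℝ] (Fin p → ℝ) := (C.mulVecLin).comp R.subtype
  let C' : Matrix (Fin p) (Fin (Module.finrank ℝ R)) ℝ :=
    LinearMap.toMatrix b (Pi.basisFun ℝ (Fin p)) fC
  refine ⟨A', K', C', ?_⟩
  have key : ∀ w : List (Fin d), R.subtype ∘ₗ Matrix.toLin b b (wordProd A' w)
      = (wordProd A w).mulVecLin ∘ₗ R.subtype := by
    intro w
    induction w with
    | nil =>
      rw [wordProd_nil, wordProd_nil, Matrix.toLin_one, Matrix.mulVecLin_one]
      refine LinearMap.ext fun x => ?_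
      simp
    | cons σ s ih =>
      rw [wordProd_cons, wordProd_cons, Matrix.toLin_mul b b b, Matrix.mulVecLin_mul]
      have hAσ : Matrix.toLin b b (A' σ) = fA σ := Matrix.toLin_toMatrix b b (fA σ)
      rw [hAσ]
      refine LinearMap.ext fun x => ?_
      have h1 : R.subtype (fA σ x) = (A σ).mulVecLin (R.subtype x) := rfl
      simp only [LinearMap.coe_comp, Function.comp_apply, h1]
      have h2 := LinearMap.congr_fun ih (fA σ x)
      simp only [LinearMap.coe_comp, Function.comp_apply] at h2
      rw [h2, h1]
  intro w σ
  have h1 : C' * wordProd A' w * K' σ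
      = LinearMap.toMatrix (Pi.basisFun ℝ (Fin m)) (Pi.basisFun ℝ (Fin p))
          (fC ∘ₗ (Matrix.toLin b b (wordProd A' w) ∘ₗ fK σ)) := by
    rw [LinearMap.toMatrix_comp (Pi.basisFun ℝ (Fin m)) b (Pi.basisFun ℝ (Fin p)),
        LinearMap.toMatrix_comp (Pi.basisFun ℝ (Fin m)) b b,
        LinearMap.toMatrix_toLin]
    rw [Matrix.mul_assoc]
  rw [h1]
  have h2 : fC ∘ₗ (Matrix.toLin b b (wordProd A' w) ∘ₗ fK σ)
      = (C * wordProd A w * K σ).mulVecLin := by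
    refine LinearMap.ext fun x => ?_
    simp only [LinearMap.coe_comp, Function.comp_apply, fC]
    have h3 := LinearMap.congr_fun (key w) (fK σ x)
    simp only [LinearMap.coe_comp, Function.comp_apply] at h3
    rw [h3]
    have h4 : R.subtype (fK σ x) = (K σ).mulVecLin x := rfl
    rw [h4, Matrix.mulVecLin_mul, Matrix.mulVecLin_mul]
    rfl
  rw [h2, toMatrix_basisFun_mulVecLin]

lemma quotient_realization (N : Submodule ℝ (Fin n → ℝ))
    (hA : ∀ i : Fin d, ∀ x ∈ N, (A i).mulVecLin x ∈ N)
    (hC : ∀ x ∈ N, C.mulVecLin x = 0) :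
    ∃ (A' : Fin d → Matrix (Fin (Module.finrank ℝ ((Fin n → ℝ) ⧸ N)))
        (Fin (Module.finrank ℝ ((Fin n → ℝ) ⧸ N))) ℝ)
      (K' : Fin d → Matrix (Fin (Module.finrank ℝ ((Fin n → ℝ) ⧸ N))) (Fin m) ℝ)
      (C' : Matrix (Fin p) (Fin (Module.finrank ℝ ((Fin n → ℝ) ⧸ N))) ℝ),
      ∀ (w : List (Fin d)) (σ : Fin d),
        C' * wordProd A' w * K' σ = C * wordProd A w * K σ := by
  classical
  let Q := (Fin n → ℝ) ⧸ N
  let b : Module.Basis (Fin (Module.finrank ℝ Q)) ℝ Q := Module.finBasis ℝ Q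
  let fA : Fin d → (Q →ₗ[ℝ] Q) :=
    fun i => N.mapQ N ((A i).mulVecLin) (fun x hx => hA i x hx)
  let A' : Fin d → Matrix (Fin (Module.finrank ℝ Q)) (Fin (Module.finrank ℝ Q)) ℝ :=
    fun i => LinearMap.toMatrix b b (fA i)
  let fK : Fin d → ((Fin m → ℝ) →ₗ[ℝ] Q) := fun σ => N.mkQ ∘ₗ (K σ).mulVecLin
  let K' : Fin d → Matrix (Fin (Module.finrank ℝ Q)) (Fin m) ℝ :=
    fun σ => LinearMap.toMatrix (Pi.basisFun ℝ (Fin m)) b (fK σ)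
  let fC : Q →ₗ[ℝ] (Fin p → ℝ) := N.liftQ (C.mulVecLin) (fun x hx => hC x hx)
  let C' : Matrix (Fin p) (Fin (Module.finrank ℝ Q)) ℝ :=
    LinearMap.toMatrix b (Pi.basisFun ℝ (Fin p)) fC
  refine ⟨A', K', C', ?_⟩
  have key : ∀ w : List (Fin d), Matrix.toLin b b (wordProd A' w) ∘ₗ N.mkQ
      = N.mkQ ∘ₗ (wordProd A w).mulVecLin := by
    intro w
    induction w with
    | nil =>
      rw [wordProd_nil, wordProd_nil, Matrix.toLin_one, Matrix.mulVecLin_one]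
      refine LinearMap.ext fun x => ?_
      simp
    | cons σ s ih =>
      rw [wordProd_cons, wordProd_cons, Matrix.toLin_mul b b b, Matrix.mulVecLin_mul]
      have hAσ : Matrix.toLin b b (A' σ) = fA σ := Matrix.toLin_toMatrix b b (fA σ)
      rw [hAσ]
      refine LinearMap.ext fun x => ?_
      simp only [LinearMap.coe_comp, Function.comp_apply]
      have h1 : fA σ (N.mkQ x) = N.mkQ ((A σ).mulVecLin x) := by
        rfl
      rw [h1]
      have h2 := LinearMap.congr_fun ih ((A σ).mulVecLin x)
      simp only [LinearMap.coe_comp, Function.comp_apply] at h2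
      rw [h2]
  intro w σ
  have h1 : C' * wordProd A' w * K' σ
      = LinearMap.toMatrix (Pi.basisFun ℝ (Fin m)) (Pi.basisFun ℝ (Fin p))
          (fC ∘ₗ (Matrix.toLin b b (wordProd A' w) ∘ₗ fK σ)) := by
    rw [LinearMap.toMatrix_comp (Pi.basisFun ℝ (Fin m)) b (Pi.basisFun ℝ (Fin p)),
        LinearMap.toMatrix_comp (Pi.basisFun ℝ (Fin m)) b b,
        LinearMap.toMatrix_toLin]
    rw [Matrix.mul_assoc]
  rw [h1]
  have h2 : fC ∘ₗ (Matrix.toLin b b (wordProd A' w) ∘ₗ fK σ)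
      = (C * wordProd A w * K σ).mulVecLin := by
    refine LinearMap.ext fun x => ?_
    simp only [LinearMap.coe_comp, Function.comp_apply, fK]
    have h3 := LinearMap.congr_fun (key w) ((K σ).mulVecLin x)
    simp only [LinearMap.coe_comp, Function.comp_apply] at h3
    rw [h3]
    have h4 : fC (N.mkQ ((wordProd A w).mulVecLin ((K σ).mulVecLin x)))
        = C.mulVecLin ((wordProd A w).mulVecLin ((K σ).mulVecLin x)) := by
      rfl
    rw [h4, Matrix.mulVecLin_mul, Matrix.mulVecLin_mul]
    rfl
  rw [h2, toMatrix_basisFun_mulVecLin]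

end Stmt13Aux

theorem stmt13 (d n m p : ℕ) (hd : 0 < d) (hn : 0 < n) (hm : 0 < m) (hpp : 0 < p)
    (A : Fin d → Matrix (Fin n) (Fin n) ℝ)
    (K : Fin d → Matrix (Fin n) (Fin m) ℝ)
    (C : Matrix (Fin p) (Fin n) ℝ) :
    IsMinimal d m p n A K C ↔
      -- span-reachability: the columns of `A_w K_σ`, `|w| ≤ n−1`, `σ ∈ Σ`, span `ℝⁿ`
      (Submodule.span ℝ {x : Fin n → ℝ |
          ∃ (w : List (Fin d)) (σ : Fin d) (j : Fin m),
            w.length ≤ n - 1 ∧ x = fun a => (wordProd A w * K σ) a j} = ⊤) ∧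
      -- observability: the intersection of the kernels of `C A_w`, `|w| ≤ n−1`, is zero
      (∀ x : Fin n → ℝ,
        (∀ w : List (Fin d), w.length ≤ n - 1 → (C * wordProd A w).mulVec x = 0) →
        x = 0) := by
  classical
  open Stmt13Aux in
  obtain ⟨n0, rfl⟩ : ∃ n0, n = n0 + 1 := ⟨n - 1, (Nat.succ_pred_eq_of_pos hn).symm⟩
  simp only [Nat.add_sub_cancel]
  constructor
  · intro hmin
    constructor
    · -- span-reachability
      by_contra hne
      have hne' : Rk A K n0 ≠ ⊤ := hne
      obtain ⟨A', K', C', hMar⟩ := restrict_realization A K C (Rk A K n0)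
        (map_A_R_stable A K n0 rfl) (fun σ u => K_mem_Rk A K σ u n0)
      have h1 := hmin _ A' K' C' hMar
      have h2 : Module.finrank ℝ (Rk A K n0) < n0 + 1 := by
        have h3 := Submodule.finrank_lt (lt_top_iff_ne_top.mpr hne').ne
        simpa [Module.finrank_pi] using h3
      omega
    · -- observability
      intro x hx
      by_contra hx0
      have hxN : x ∈ Nk A C n0 := hx
      have hN : Nk A C n0 ≠ ⊥ := by
        intro hb
        rw [hb, Submodule.mem_bot] at hxN
        exact hx0 hxN
      obtain ⟨A', K', C', hMar⟩ := quotient_realization A K C (Nk A C n0)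
        (map_A_N_stable A C n0 rfl) (fun y hy => C_ker_N A C hy)
      have h1 := hmin _ A' K' C' hMar
      have h2 := Submodule.finrank_quotient_add_finrank (Nk A C n0)
      simp only [Module.finrank_pi, Fintype.card_fin] at h2
      have h3 : 0 < Module.finrank ℝ (Nk A C n0) :=
        Module.finrank_pos_iff.mpr (Submodule.nontrivial_iff_ne_bot.mpr hN)
      omega
  · rintro ⟨hreach, hobs⟩
    intro n' A' K' C' hMar
    let Obs : (Fin (n0 + 1) → ℝ) →ₗ[ℝ] (List (Fin d) → Fin p → ℝ) :=
      LinearMap.pi (fun w => (C * wordProd A w).mulVecLin)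
    let Obs' : (Fin n' → ℝ) →ₗ[ℝ] (List (Fin d) → Fin p → ℝ) :=
      LinearMap.pi (fun w => (C' * wordProd A' w).mulVecLin)
    have hker : LinearMap.ker Obs = ⊥ := by
      refine (Submodule.eq_bot_iff _).mpr fun x hx => ?_
      refine hobs x fun w _ => ?_
      have h0 : Obs x w = 0 := by rw [LinearMap.mem_ker.mp hx]; rfl
      simpa [Obs, LinearMap.pi_apply, Matrix.mulVecLin_apply] using h0
    have hinj : Function.Injective Obs := LinearMap.ker_eq_bot.mp hker
    have hrange : LinearMap.range Obs ≤ LinearMap.range Obs' := by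
      rw [LinearMap.range_eq_map, ← hreach, Submodule.map_span, Submodule.span_le]
      rintro _ ⟨x, ⟨w, σ, j, hw, rfl⟩, rfl⟩
      refine ⟨(fun a => (wordProd A' w * K' σ) a j), ?_⟩
      funext v
      show (C' * wordProd A' v).mulVecLin (fun a => (wordProd A' w * K' σ) a j)
         = (C * wordProd A v).mulVecLin (fun a => (wordProd A w * K σ) a j)
      rw [Matrix.mulVecLin_apply, Matrix.mulVecLin_apply, mulVec_col, mulVec_col]
      have h5 : ∀ {q : ℕ} (C0 : Matrix (Fin p) (Fin q) ℝ)
          (A0 : Fin d → Matrix (Fin q) (Fin q) ℝ) (K0 : Fin d → Matrix (Fin q) (Fin m) ℝ),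
          C0 * wordProd A0 v * (wordProd A0 w * K0 σ)
            = C0 * wordProd A0 (w ++ v) * K0 σ := by
        intro q C0 A0 K0
        rw [wordProd_append]
        simp only [Matrix.mul_assoc]
      rw [h5, h5, hMar (w ++ v) σ]
    have hr1 : Module.finrank ℝ (LinearMap.range Obs) = n0 + 1 := by
      rw [LinearMap.finrank_range_of_inj hinj]
      simp [Module.finrank_pi]
    have hfd : Module.Finite ℝ (LinearMap.range Obs') := Module.Finite.range Obs'
    have hr2 : Module.finrank ℝ (LinearMap.range Obs') ≤ n' := by
      have h6 := LinearMap.finrank_range_le Obs'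
      simpa [Module.finrank_pi] using h6
    have hr3 := Submodule.finrank_mono hrange
    omega
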